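/- arXiv:1503.00334 — 6 statements merged into one kernel-verified Lean document; each statement's English description precedes it below -/
import Mathlib

section
/- The truncated Gaussian CDF F^{[a,b]}_{μ,σ²}(x) = (Φ((x−μ)/σ) − Φ((a−μ)/σ)) / (Φ((b−μ)/σ) − Φ((a−μ)/σ)) is, for fixed x ∈ (a,b), σ > 0, and a < b, a strictly decreasing function of μ. -/
/-!
With `φ` the standard normal density and `t = -μ/σ`, the truncated CDF is `N(t) / (N(t) + M(t))`
where `N(t) = ∫_u^v φ(s + t) ds`, `M(t) = ∫_v^w φ(s + t) ds` and `u < v < w` are `a/σ, x/σ, b/σ`.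
For `t < t'`, `φ(s + t)` is `φ(s + t')` times the increasing weight `exp((t' - t) s)` up to a
constant factor, so passing from `t'` to `t` moves mass from `[u, v]` to `[v, w]`:
`M(t') N(t) < N(t') M(t)`. Hence the truncated CDF increases strictly in `t`.
-/

open MeasureTheory ProbabilityTheory Real

lemma mul_integral_mul_lt_of_strictMono {f g : ℝ → ℝ} {u v w : ℝ} (hf : Continuous f)
    (hf_pos : ∀ s, 0 < f s) (hg : Continuous g) (hg_mono : StrictMono g)
    (huv : u < v) (hvw : v < w) :
    (∫ s in v..w, f s) * ∫ s in u..v, g s * f s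
      < (∫ s in u..v, f s) * ∫ s in v..w, g s * f s := by
  have hgf : Continuous fun s => g s * f s := hg.mul hf
  have hgv : Continuous fun s => g v * f s := continuous_const.mul hf
  have hleft : (∫ s in u..v, g s * f s) < g v * ∫ s in u..v, f s := by
    rw [← intervalIntegral.integral_const_mul]
    refine intervalIntegral.integral_lt_integral_of_continuousOn_of_le_of_exists_lt huv
      hgf.continuousOn hgv.continuousOn (fun s hs => ?_)
      ⟨u, Set.left_mem_Icc.2 huv.le, mul_lt_mul_of_pos_right (hg_mono huv) (hf_pos u)⟩
    exact mul_le_mul_of_nonneg_right (hg_mono.monotone hs.2) (hf_pos s).le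
  have hright : g v * (∫ s in v..w, f s) < ∫ s in v..w, g s * f s := by
    rw [← intervalIntegral.integral_const_mul]
    refine intervalIntegral.integral_lt_integral_of_continuousOn_of_le_of_exists_lt hvw
      hgv.continuousOn hgf.continuousOn (fun s hs => ?_)
      ⟨w, Set.right_mem_Icc.2 hvw.le, mul_lt_mul_of_pos_right (hg_mono hvw) (hf_pos w)⟩
    exact mul_le_mul_of_nonneg_right (hg_mono.monotone hs.1.le) (hf_pos s).le
  have hM : 0 < ∫ s in v..w, f s :=
    intervalIntegral.intervalIntegral_pos_of_pos (hf.intervalIntegrable _ _) hf_pos hvw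
  have hN : 0 < ∫ s in u..v, f s :=
    intervalIntegral.intervalIntegral_pos_of_pos (hf.intervalIntegrable _ _) hf_pos huv
  calc (∫ s in v..w, f s) * ∫ s in u..v, g s * f s
      < (∫ s in v..w, f s) * (g v * ∫ s in u..v, f s) := mul_lt_mul_of_pos_left hleft hM
    _ = (∫ s in u..v, f s) * (g v * ∫ s in v..w, f s) := by ring
    _ < (∫ s in u..v, f s) * ∫ s in v..w, g s * f s := mul_lt_mul_of_pos_left hright hN

lemma continuous_gaussianPDFReal (μ : ℝ) (v : NNReal) : Continuous (gaussianPDFReal μ v) := by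
  rw [gaussianPDFReal_def]
  fun_prop

lemma cdf_gaussianReal_sub_cdf (μ : ℝ) {v : NNReal} (hv : v ≠ 0) (a b : ℝ) :
    cdf (gaussianReal μ v) b - cdf (gaussianReal μ v) a = ∫ s in a..b, gaussianPDFReal μ v s := by
  have hint : ∀ c, IntegrableOn (gaussianPDFReal μ v) (Set.Iic c) := fun _ =>
    (integrable_gaussianPDFReal μ v).integrableOn
  simp only [cdf_eq_real, measureReal_def, gaussianReal_apply_eq_integral μ hv,
    ENNReal.toReal_ofReal (setIntegral_nonneg measurableSet_Iic
      fun s _ => gaussianPDFReal_nonneg μ v s)]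
  exact intervalIntegral.integral_Iic_sub_Iic (hint a) (hint b)

lemma exp_mul_gaussianPDFReal_zero_one (δ s : ℝ) :
    exp (δ * s) * gaussianPDFReal 0 1 s = exp (δ ^ 2 / 2) * gaussianPDFReal 0 1 (s - δ) := by
  simp only [gaussianPDFReal, NNReal.coe_one, sub_zero]
  rw [mul_left_comm, ← exp_add, mul_left_comm, ← exp_add]
  ring_nf

lemma integral_gaussianPDFReal_add_mul_lt_mul {u v w t t' : ℝ} (huv : u < v) (hvw : v < w)
    (htt' : t < t') :
    (∫ s in v..w, gaussianPDFReal 0 1 (s + t')) * ∫ s in u..v, gaussianPDFReal 0 1 (s + t)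
      < (∫ s in u..v, gaussianPDFReal 0 1 (s + t')) *
          ∫ s in v..w, gaussianPDFReal 0 1 (s + t) := by
  have htilt : ∀ s, exp ((t' - t) * (s + t')) * gaussianPDFReal 0 1 (s + t')
      = exp ((t' - t) ^ 2 / 2) * gaussianPDFReal 0 1 (s + t) := fun s => by
    rw [exp_mul_gaussianPDFReal_zero_one, show s + t' - (t' - t) = s + t by ring]
  have key := mul_integral_mul_lt_of_strictMono (g := fun s => exp ((t' - t) * (s + t')))
    ((continuous_gaussianPDFReal 0 1).comp (continuous_add_const t'))
    (fun s => gaussianPDFReal_pos 0 1 (s + t') one_ne_zero) (by fun_prop)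
    (fun _ _ h => exp_lt_exp.2 (mul_lt_mul_of_pos_left (add_lt_add_left h t') (sub_pos.2 htt')))
    huv hvw
  simp only [Function.comp_apply, htilt, intervalIntegral.integral_const_mul] at key
  nlinarith [exp_pos ((t' - t) ^ 2 / 2)]

lemma strictMono_cdf_gaussianReal_ratio_add {u v w : ℝ} (huv : u < v) (hvw : v < w) :
    StrictMono fun t => (cdf (gaussianReal 0 1) (v + t) - cdf (gaussianReal 0 1) (u + t)) /
      (cdf (gaussianReal 0 1) (w + t) - cdf (gaussianReal 0 1) (u + t)) := by
  intro t t' htt'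
  have hmass : ∀ c d r, cdf (gaussianReal 0 1) (d + r) - cdf (gaussianReal 0 1) (c + r)
      = ∫ s in c..d, gaussianPDFReal 0 1 (s + r) := fun c d r => by
    rw [cdf_gaussianReal_sub_cdf 0 one_ne_zero, intervalIntegral.integral_comp_add_right]
  have hpos : ∀ {c d} r, c < d → 0 < ∫ s in c..d, gaussianPDFReal 0 1 (s + r) := fun r hcd =>
    intervalIntegral.intervalIntegral_pos_of_pos
      (((continuous_gaussianPDFReal 0 1).comp (continuous_add_const r)).intervalIntegrable _ _)
      (fun s => gaussianPDFReal_pos 0 1 (s + r) one_ne_zero) hcd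
  have hsplit : ∀ r, cdf (gaussianReal 0 1) (w + r) - cdf (gaussianReal 0 1) (u + r)
      = (cdf (gaussianReal 0 1) (v + r) - cdf (gaussianReal 0 1) (u + r))
        + (cdf (gaussianReal 0 1) (w + r) - cdf (gaussianReal 0 1) (v + r)) := fun r => by ring
  simp only [hsplit, hmass]
  rw [div_lt_div_iff₀ (add_pos (hpos t huv) (hpos t hvw)) (add_pos (hpos t' huv) (hpos t' hvw))]
  linarith [integral_gaussianPDFReal_add_mul_lt_mul huv hvw htt']

theorem truncated_gaussian_cdf_strictAnti_in_mean_general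
    (Φ : ℝ → ℝ) (hΦ : Φ = fun t => ProbabilityTheory.cdf (gaussianReal 0 1) t)
    (a b x σ : ℝ) (hσ : 0 < σ) (hax : a < x) (hxb : x < b) :
    StrictAnti (fun m : ℝ =>
      (Φ ((x - m)/σ) - Φ ((a - m)/σ)) / (Φ ((b - m)/σ) - Φ ((a - m)/σ))) := by
  subst hΦ
  have hshift : StrictAnti fun m : ℝ => -m / σ := fun m m' h =>
    div_lt_div_of_pos_right (neg_lt_neg h) hσ
  have hmono := strictMono_cdf_gaussianReal_ratio_add
    (div_lt_div_of_pos_right hax hσ) (div_lt_div_of_pos_right hxb hσ)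
  convert hmono.comp_strictAnti hshift using 2 with m
  simp only [Function.comp_apply, sub_div, neg_div, ← sub_eq_add_neg]

/-- The truncated Gaussian CDF at a fixed point `x ∈ (a,b)` is strictly decreasing
as a function of the mean parameter `μ`. -/
theorem truncated_gaussian_cdf_strictAnti_in_mean
    (Φ : ℝ → ℝ) (hΦ : Φ = fun t => ProbabilityTheory.cdf (gaussianReal 0 1) t)
    (a b x σ : ℝ) (hσ : 0 < σ) (hab : a < b) (hax : a < x) (hxb : x < b) :
    StrictAnti (fun m : ℝ =>
      (Φ ((x - m)/σ) - Φ ((a - m)/σ)) / (Φ ((b - m)/σ) - Φ ((a - m)/σ))) :=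
  truncated_gaussian_cdf_strictAnti_in_mean_general Φ hΦ a b x σ hσ hax hxb
end

section
/- Polyhedral lemma: Let y ~ N(μ, σ²Iₙ), η ∈ ℝⁿ nonzero, A ∈ ℝ^{m×n}, b ∈ ℝᵐ. Define α = Aη/‖η‖², z = (I − ηηᵀ/‖η‖²)y, V⁻(z) = max{ (b_i − (Az)_i)/α_i : α_i < 0 }, V⁺(z) = min{ (b_i − (Az)_i)/α_i : α_i > 0 }, and V⁰(z) = min{ b_i − (Az)_i : α_i = 0 }. Then the event {Ay ≤ b} equals the event {V⁻(z) ≤ ηᵀy ≤ V⁺(z) and V⁰(z) ≥ 0}. -/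
open MeasureTheory

/-- Polyhedral lemma of Lee et al.: the event `{Ay ≤ b}` can be rewritten as
`{V⁻(z) ≤ ηᵀy ≤ V⁺(z), V⁰(z) ≥ 0}` where `z` is the part of `y` orthogonal to `η`. -/
theorem polyhedral_lemma
    {n m : ℕ} (A : Matrix (Fin m) (Fin n) ℝ) (b : Fin m → ℝ)
    (η : Fin n → ℝ) (hη : η ≠ 0) (y : Fin n → ℝ)
    (α : Fin m → ℝ) (hα : α = fun i => A.mulVec η i / (∑ j, η j ^ 2))
    (z : Fin n → ℝ) (hz : z = y - ((∑ j, η j * y j) / (∑ j, η j ^ 2)) • η)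
    (Vminus Vplus V0 : EReal)
    (hVminus : Vminus = sSup {v : EReal | ∃ i, α i < 0 ∧ v = (((b i - A.mulVec z i) / α i : ℝ) : EReal)})
    (hVplus : Vplus = sInf {v : EReal | ∃ i, 0 < α i ∧ v = (((b i - A.mulVec z i) / α i : ℝ) : EReal)})
    (hV0 : V0 = sInf {v : EReal | ∃ i, α i = 0 ∧ v = (((b i - A.mulVec z i) : ℝ) : EReal)}) :
    (∀ i, A.mulVec y i ≤ b i)
      ↔ (Vminus ≤ ((∑ j, η j * y j : ℝ) : EReal)
          ∧ ((∑ j, η j * y j : ℝ) : EReal) ≤ Vplus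
          ∧ (0 : EReal) ≤ V0) := by
  set S : ℝ := ∑ j, η j ^ 2 with hS
  set t : ℝ := ∑ j, η j * y j with ht
  have hSpos : 0 < S := by
    obtain ⟨j, hj⟩ := Function.ne_iff.mp hη
    exact Finset.sum_pos' (fun j _ => sq_nonneg _) ⟨j, Finset.mem_univ j, pow_pos (abs_pos.mpr hj) 2 |>.trans_eq (by rw [sq_abs])⟩
  have hSne : S ≠ 0 := ne_of_gt hSpos
  have hAz : ∀ i, A.mulVec z i = A.mulVec y i - t * α i := by
    intro i
    rw [hz, hα]
    simp only [Matrix.mulVec_sub, Matrix.mulVec_smul, Pi.sub_apply, Pi.smul_apply,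
      smul_eq_mul]
    field_simp
  have key : ∀ i, A.mulVec y i ≤ b i ↔ t * α i ≤ b i - A.mulVec z i := by
    intro i
    rw [hAz i]
    constructor <;> intro h <;> linarith
  constructor
  · intro h
    refine ⟨?_, ?_, ?_⟩
    · rw [hVminus]
      apply sSup_le
      rintro v ⟨i, hi, rfl⟩
      rw [EReal.coe_le_coe_iff, div_le_iff_of_neg hi]
      exact (key i).mp (h i)
    · rw [hVplus]
      apply le_sInf
      rintro v ⟨i, hi, rfl⟩
      rw [EReal.coe_le_coe_iff, le_div_iff₀ hi]
      exact (key i).mp (h i)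
    · rw [hV0]
      apply le_sInf
      rintro v ⟨i, hi, rfl⟩
      have := (key i).mp (h i)
      rw [hi, mul_zero] at this
      exact_mod_cast this
  · rintro ⟨h1, h2, h3⟩ i
    rw [key i]
    rcases lt_trichotomy (α i) 0 with hlt | heq | hgt
    · have hmem : (((b i - A.mulVec z i) / α i : ℝ) : EReal) ∈
        {v : EReal | ∃ i, α i < 0 ∧ v = (((b i - A.mulVec z i) / α i : ℝ) : EReal)} :=
        ⟨i, hlt, rfl⟩
      have := (le_sSup hmem).trans (hVminus ▸ h1)
      rw [EReal.coe_le_coe_iff, div_le_iff_of_neg hlt] at this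
      exact this
    · have hmem : (((b i - A.mulVec z i) : ℝ) : EReal) ∈
        {v : EReal | ∃ i, α i = 0 ∧ v = (((b i - A.mulVec z i) : ℝ) : EReal)} :=
        ⟨i, heq, rfl⟩
      have := (hV0 ▸ h3).trans (sInf_le hmem)
      rw [heq, mul_zero]
      exact_mod_cast this
    · have hmem : (((b i - A.mulVec z i) / α i : ℝ) : EReal) ∈
        {v : EReal | ∃ i, 0 < α i ∧ v = (((b i - A.mulVec z i) / α i : ℝ) : EReal)} :=
        ⟨i, hgt, rfl⟩
      have := (hVplus ▸ h2).trans (sInf_le hmem)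
      rw [EReal.coe_le_coe_iff, le_div_iff₀ hgt] at this
      exact this
end

section
/- Let W₁,…,W_K be real random variables and ε ∈ {±1}^K an independent random sign vector with ε_k = +1 for k in a fixed set S (non-nulls) and ε_k uniform on {±1} i.i.d. for k ∉ S. If (W₁,…,W_K) is equal in distribution to (ε₁W₁,…,ε_K W_K), then conditional on (|W₁|,…,|W_K|), the signs {sign(W_k) : k ∉ S, W_k ≠ 0} are i.i.d. uniform on {±1}. -/
/-! If `W` has the same law as `ε * W`, then `P(W ∈ A) = P(ε * W ∈ A)` for the event `A` that the
signs off `S` follow `τ` and the magnitudes lie in `E`. Since `|ε * x| = |x|`, for a fixed `x` the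
point `ε * x` lies in `A` exactly when `x` is nonzero off `S`, `|x| ∈ E`, and `ε k = τ k * sign (x k)`
for every `k ∉ S`; by independence of the Rademacher signs this has probability `(1/2) ^ |Sᶜ|`.
Integrating this over the law of `W`, which is independent of `ε`, gives the claim. -/

open MeasureTheory ProbabilityTheory

theorem Real.measurable_sign : Measurable Real.sign :=
  Measurable.ite measurableSet_Iio measurable_const
    (Measurable.ite measurableSet_Ioi measurable_const measurable_const)

theorem Real.sign_mul_eq_iff {e y t : ℝ} (he : e = 1 ∨ e = -1) (hy : y ≠ 0) :
    Real.sign (e * y) = t ↔ e = t * Real.sign y := by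
  rcases he with rfl | rfl <;> rcases Real.sign_apply_eq_of_ne_zero y hy with hs | hs <;>
    simp only [one_mul, neg_one_mul, Real.sign_neg, hs] <;> constructor <;> intro <;> linarith

section SignPatterns

variable {ι : Type*} (S : Finset ι)

def signAbsSet (τ : ι → ℝ) (E : Set (ι → ℝ)) : Set (ι → ℝ) :=
  {x | ∀ k ∉ S, x k ≠ 0 ∧ Real.sign (x k) = τ k} ∩ {x | (fun k => |x k|) ∈ E}

def nonzeroAbsSet (E : Set (ι → ℝ)) : Set (ι → ℝ) :=
  {x | ∀ k ∉ S, x k ≠ 0} ∩ {x | (fun k => |x k|) ∈ E}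

variable {S} {E : Set (ι → ℝ)}

theorem measurableSet_setOf_abs_mem [Countable ι] (hE : MeasurableSet E) :
    MeasurableSet {x : ι → ℝ | (fun k => |x k|) ∈ E} :=
  measurable_pi_lambda _ (fun k => (measurable_pi_apply k).abs) hE

theorem measurableSet_signAbsSet [Countable ι] (τ : ι → ℝ) (hE : MeasurableSet E) :
    MeasurableSet (signAbsSet S τ E) := by
  refine .inter ?_ (measurableSet_setOf_abs_mem hE)
  simp only [Set.ofPred_forall]
  refine .iInter fun k => .iInter fun _ => .inter ?_ ?_
  · exact (measurableSet_singleton 0).compl.preimage (measurable_pi_apply k)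
  · exact (measurableSet_singleton _).preimage (Real.measurable_sign.comp (measurable_pi_apply k))

theorem measurableSet_nonzeroAbsSet [Countable ι] (hE : MeasurableSet E) :
    MeasurableSet (nonzeroAbsSet S E) := by
  refine .inter ?_ (measurableSet_setOf_abs_mem hE)
  simp only [Set.ofPred_forall]
  exact .iInter fun k => .iInter fun _ =>
    (measurableSet_singleton 0).compl.preimage (measurable_pi_apply k)

theorem mul_mem_signAbsSet_iff {τ e x : ι → ℝ} (he : ∀ k, e k = 1 ∨ e k = -1) :
    e * x ∈ signAbsSet S τ E ↔
      x ∈ nonzeroAbsSet S E ∧ ∀ k ∉ S, e k = τ k * Real.sign (x k) := by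
  have habs : (fun k => |e k * x k|) = fun k => |x k| := by
    funext k
    rcases he k with h | h <;> simp [h]
  simp only [signAbsSet, nonzeroAbsSet, Set.mem_inter_iff, Set.mem_ofPred_eq, Pi.mul_apply]
  rw [habs]
  constructor
  · rintro ⟨hsign, hxE⟩
    have hx : ∀ k ∉ S, x k ≠ 0 := fun k hk => right_ne_zero_of_mul (hsign k hk).1
    exact ⟨⟨hx, hxE⟩, fun k hk => (Real.sign_mul_eq_iff (he k) (hx k hk)).1 (hsign k hk).2⟩
  · rintro ⟨⟨hx, hxE⟩, hpattern⟩
    refine ⟨fun k hk => ⟨mul_ne_zero ?_ (hx k hk), ?_⟩, hxE⟩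
    · rcases he k with h | h <;> simp [h]
    · exact (Real.sign_mul_eq_iff (he k) (hx k hk)).2 (hpattern k hk)

end SignPatterns

section Probability

variable {Ω : Type*} [MeasurableSpace Ω] {μ : Measure Ω}

theorem ProbabilityTheory.IndepFun.measure_preimage_eq_lintegral [IsFiniteMeasure μ]
    {α β : Type*} [MeasurableSpace α] [MeasurableSpace β] {X : Ω → α} {Y : Ω → β}
    (h : IndepFun X Y μ) (hX : Measurable X) (hY : Measurable Y)
    {s : Set (α × β)} (hs : MeasurableSet s) :
    μ ((fun ω => (X ω, Y ω)) ⁻¹' s) = ∫⁻ y, μ (X ⁻¹' {x | (x, y) ∈ s}) ∂(μ.map Y) := by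
  rw [← Measure.map_apply (hX.prodMk hY) hs,
    (indepFun_iff_map_prod_eq_prod_map_map hX.aemeasurable hY.aemeasurable).1 h,
    Measure.prod_apply_symm hs]
  exact lintegral_congr fun y => Measure.map_apply hX (measurable_prodMk_right hs)

theorem ProbabilityTheory.iIndepFun.measure_forall_eq {ι β : Type*} [MeasurableSpace β]
    [MeasurableSingletonClass β] {X : ι → Ω → β} (h : iIndepFun X μ) (T : Finset ι)
    (q : ι → β) : μ {ω | ∀ k ∈ T, X k ω = q k} = ∏ k ∈ T, μ {ω | X k ω = q k} := by
  have hset : {ω | ∀ k ∈ T, X k ω = q k} = ⋂ k ∈ T, X k ⁻¹' {q k} := by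
    ext ω
    simp
  rw [hset, h.meas_biInter fun k _ => ⟨{q k}, measurableSet_singleton _, rfl⟩]
  rfl

variable [IsProbabilityMeasure μ]

theorem measure_eq_half_of_pm_one {X : Ω → ℝ} (hX : Measurable X)
    (hpm : ∀ ω, X ω = 1 ∨ X ω = -1) (hunif : μ {ω | X ω = 1} = 1 / 2)
    {a : ℝ} (ha : a = 1 ∨ a = -1) : μ {ω | X ω = a} = 1 / 2 := by
  rcases ha with rfl | rfl
  · exact hunif
  · have hcompl : {ω | X ω = -1} = {ω | X ω = 1}ᶜ := by
      ext ω
      rcases hpm ω with h | h <;> simp [h] <;> norm_num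
    have hm : MeasurableSet {ω | X ω = 1} := hX (measurableSet_singleton 1)
    rw [hcompl, prob_compl_eq_one_sub hm, hunif, one_div, ENNReal.one_sub_inv_two]

theorem measure_forall_notMem_eq_half_pow {ι : Type*} [Fintype ι] [DecidableEq ι]
    {S : Finset ι} {X : ι → Ω → ℝ} (h : iIndepFun X μ) (hX : ∀ k, Measurable (X k))
    (hpm : ∀ k ∉ S, ∀ ω, X k ω = 1 ∨ X k ω = -1) (hunif : ∀ k ∉ S, μ {ω | X k ω = 1} = 1 / 2)
    {q : ι → ℝ} (hq : ∀ k ∉ S, q k = 1 ∨ q k = -1) :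
    μ {ω | ∀ k ∉ S, X k ω = q k} = (1 / 2) ^ Sᶜ.card := by
  have hset : {ω | ∀ k ∉ S, X k ω = q k} = {ω | ∀ k ∈ Sᶜ, X k ω = q k} := by simp
  have hhalf : ∀ k ∈ Sᶜ, μ {ω | X k ω = q k} = 1 / 2 := fun k hk => by
    rw [Finset.mem_compl] at hk
    exact measure_eq_half_of_pm_one (hX k) (hpm k hk) (hunif k hk) (hq k hk)
  rw [hset, h.measure_forall_eq, Finset.prod_congr rfl hhalf, Finset.prod_const]

theorem measure_mul_mem_signAbsSet {ι : Type*} [Fintype ι] [DecidableEq ι]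
    {S : Finset ι} {X : ι → Ω → ℝ} (h : iIndepFun X μ) (hX : ∀ k, Measurable (X k))
    (hpm : ∀ k ω, X k ω = 1 ∨ X k ω = -1) (hunif : ∀ k ∉ S, μ {ω | X k ω = 1} = 1 / 2)
    {τ : ι → ℝ} (hτ : ∀ k ∉ S, τ k = 1 ∨ τ k = -1) (E : Set (ι → ℝ)) (x : ι → ℝ) :
    μ {ω | (fun k => X k ω) * x ∈ signAbsSet S τ E}
      = (nonzeroAbsSet S E).indicator (fun _ => (1 / 2) ^ Sᶜ.card) x := by
  by_cases hx : x ∈ nonzeroAbsSet S E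
  · have hset : {ω | (fun k => X k ω) * x ∈ signAbsSet S τ E}
        = {ω | ∀ k ∉ S, X k ω = τ k * Real.sign (x k)} := by
      ext ω
      simp [mul_mem_signAbsSet_iff (hpm · ω), hx]
    rw [hset, Set.indicator_of_mem hx]
    refine measure_forall_notMem_eq_half_pow h hX (fun k _ => hpm k) hunif fun k hk => ?_
    rcases hτ k hk with hτk | hτk <;>
      rcases Real.sign_apply_eq_of_ne_zero _ (hx.1 k hk) with hxk | hxk <;> simp [hτk, hxk]
  · have hset : {ω | (fun k => X k ω) * x ∈ signAbsSet S τ E} = ∅ := by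
      ext ω
      simp [mul_mem_signAbsSet_iff (hpm · ω), hx]
    rw [hset, Set.indicator_of_notMem hx, measure_empty]

end Probability

/-- If `(W₁,…,W_K)` is equal in distribution to `(ε₁W₁,…,ε_K W_K)` for an independent
sign vector `ε` which is `+1` on the non-null set `S` and i.i.d. uniform on `{±1}`
off `S`, then conditional on the magnitudes `(|W₁|,…,|W_K|)` the signs of the nonzero
null `W_k` are i.i.d. uniform on `{±1}`: jointly, for every fixed sign pattern `τ`
on the nulls, the event costs an exact factor `(1/2)^{#nulls}`. -/
theorem sign_symmetry_conditional_iid_signs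
    {Ω : Type*} [MeasurableSpace Ω] (μ : Measure Ω) [IsProbabilityMeasure μ]
    {K : ℕ} (W : Fin K → Ω → ℝ) (hW : ∀ k, Measurable (W k))
    (S : Finset (Fin K))
    (ε : Fin K → Ω → ℝ) (hεmeas : ∀ k, Measurable (ε k))
    (hεS : ∀ k ∈ S, ∀ ω, ε k ω = 1)
    (hεpm : ∀ k ∉ S, ∀ ω, ε k ω = 1 ∨ ε k ω = -1)
    (hεunif : ∀ k ∉ S, μ {ω | ε k ω = 1} = 1/2)
    (hεiid : iIndepFun ε μ)
    (hεW : IndepFun (fun ω k => ε k ω) (fun ω k => W k ω) μ)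
    (hdist : μ.map (fun ω (k : Fin K) => W k ω)
      = μ.map (fun ω (k : Fin K) => ε k ω * W k ω)) :
    ∀ τ : Fin K → ℝ, (∀ k ∉ S, τ k = 1 ∨ τ k = -1) →
    ∀ E : Set (Fin K → ℝ), MeasurableSet E →
      μ ({ω | ∀ k ∉ S, W k ω ≠ 0 ∧ Real.sign (W k ω) = τ k}
          ∩ {ω | (fun k => |W k ω|) ∈ E})
        = (1/2) ^ ((Sᶜ : Finset (Fin K)).card)
            * μ ({ω | ∀ k ∉ S, W k ω ≠ 0} ∩ {ω | (fun k => |W k ω|) ∈ E}) := by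
  intro τ hτ E hE
  set X : Ω → Fin K → ℝ := fun ω k => ε k ω
  set V : Ω → Fin K → ℝ := fun ω k => W k ω
  set A := signAbsSet S τ E
  have hX : Measurable X := measurable_pi_lambda _ hεmeas
  have hV : Measurable V := measurable_pi_lambda _ hW
  have hA : MeasurableSet A := measurableSet_signAbsSet τ hE
  have hB : MeasurableSet (nonzeroAbsSet S E) := measurableSet_nonzeroAbsSet hE
  have hpm : ∀ k ω, ε k ω = 1 ∨ ε k ω = -1 := fun k ω =>
    if hk : k ∈ S then .inl (hεS k hk ω) else hεpm k hk ω
  calc μ (V ⁻¹' A) = μ.map V A := (Measure.map_apply hV hA).symm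
    _ = μ.map (fun ω => X ω * V ω) A := by rw [hdist]; rfl
    _ = μ ((fun ω => (X ω, V ω)) ⁻¹' {p | p.1 * p.2 ∈ A}) := Measure.map_apply (hX.mul hV) hA
    _ = ∫⁻ x, μ (X ⁻¹' {e | e * x ∈ A}) ∂μ.map V :=
      hεW.measure_preimage_eq_lintegral hX hV ((measurable_fst.mul measurable_snd) hA)
    _ = ∫⁻ x, (nonzeroAbsSet S E).indicator (fun _ => (1 / 2) ^ Sᶜ.card) x ∂μ.map V :=
      lintegral_congr (measure_mul_mem_signAbsSet hεiid hεmeas hpm hεunif hτ E)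
    _ = (1 / 2) ^ Sᶜ.card * μ (V ⁻¹' nonzeroAbsSet S E) := by
      rw [lintegral_indicator_const hB, Measure.map_apply hV hB]
end

section
/- Under the knockoff conditions XᵀX = X̃ᵀX̃ and XᵀX̃ = XᵀX − diag(s), if β_k = 0 (column k is null) then swapping x_k and x̃_k leaves the combined Gram matrix [X X̃]ᵀ[X X̃] unchanged. -/
/-- Under the knockoff conditions, if `β k = 0` then swapping the `k`-th columns of
`X` and `X̃` leaves the Gram matrix of `[X X̃]` unchanged. -/
theorem knockoff_swap_gram_invariant
    {n p : ℕ} (X Xt : Matrix (Fin n) (Fin p) ℝ) (s : Fin p → ℝ)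
    (hGram : Xt.transpose * Xt = X.transpose * X)
    (hCross : X.transpose * Xt = X.transpose * X - Matrix.diagonal s)
    (β : Fin p → ℝ) (k : Fin p) (hβ : β k = 0)
    (M N : Matrix (Fin n) (Fin p ⊕ Fin p) ℝ)
    (hM : M = Matrix.of fun i j => Sum.elim (fun a => X i a) (fun a => Xt i a) j)
    (hN : N = Matrix.of fun i j =>
      Sum.elim (fun a => if a = k then Xt i a else X i a)
               (fun a => if a = k then X i a else Xt i a) j) :
    N.transpose * N = M.transpose * M := by
  have hG : ∀ a b, (∑ i, Xt i a * Xt i b) = ∑ i, X i a * X i b := by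
    intro a b
    have := congrFun (congrFun hGram a) b
    simpa [Matrix.mul_apply, Matrix.transpose_apply] using this
  have hC : ∀ a b, (∑ i, X i a * Xt i b) =
      (∑ i, X i a * X i b) - Matrix.diagonal s a b := by
    intro a b
    have := congrFun (congrFun hCross a) b
    simpa [Matrix.mul_apply, Matrix.transpose_apply, Matrix.sub_apply] using this
  have hC' : ∀ a b, (∑ i, Xt i a * X i b) =
      (∑ i, X i a * X i b) - Matrix.diagonal s b a := by
    intro a b
    have h1 := hC b a
    calc (∑ i, Xt i a * X i b) = ∑ i, X i b * Xt i a := by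
          simp [mul_comm]
      _ = (∑ i, X i b * X i a) - Matrix.diagonal s b a := h1
      _ = (∑ i, X i a * X i b) - Matrix.diagonal s b a := by
          simp [mul_comm]
  subst hM hN
  ext j1 j2
  rcases j1 with a | a <;> rcases j2 with b | b <;>
    by_cases ha : a = k <;> by_cases hb : b = k <;>
    simp [Matrix.mul_apply, Matrix.transpose_apply, ha, hb, hG, hC, hC',
      Matrix.diagonal_apply, mul_comm] <;>
  · first
    | (rw [hG])
    | (rw [hC, hC'] <;> simp [Matrix.diagonal_apply, ha, hb, Ne.symm])
    | (rw [hC'] ; simp [Matrix.diagonal_apply, ha, hb, Ne.symm])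
    | (rw [hC] ; simp [Matrix.diagonal_apply, ha, hb, Ne.symm])
    | (simp [eq_comm, ha, hb])
    | (rw [if_neg (fun h => hb h.symm)]; ring)
    | (rw [if_neg (fun h => ha h.symm)]; ring)
    | (intro h; first | exact absurd h.symm ha | exact absurd h.symm hb)
end

section
/- For V ~ Binomial(m, 1/2) and R = m − V, we have E[V/(1+R)] ≤ 1 for every m ≥ 0. -/
lemma sum_k_choose (m : ℕ) :
    ∑ k ∈ Finset.range (m + 2), k * (m+1).choose k = (m+1) * 2^m := by
  rw [Finset.sum_range_succ']
  simp only [Nat.zero_mul, Nat.add_zero]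
  have : ∀ i, (i+1) * (m+1).choose (i+1) = (m+1) * m.choose i := by
    intro i
    rw [mul_comm, Nat.add_one_mul_choose_eq]
  rw [Finset.sum_congr rfl (fun i _ => this i), ← Finset.mul_sum, Nat.sum_range_choose]

lemma key_id (m k : ℕ) (hk : k ≤ m) :
    (m + 1 - k) * (m+1).choose k = (m+1) * m.choose k := by
  have h1 : (m+1) * Nat.choose m (m - k) = Nat.choose (m+1) (m - k + 1) * (m - k + 1) :=
    Nat.add_one_mul_choose_eq m (m - k)
  rw [Nat.choose_symm hk] at h1
  have h2 : m - k + 1 = m + 1 - k := by omega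
  rw [h2] at h1
  have h3 : (m+1).choose (m + 1 - k) = (m+1).choose k := Nat.choose_symm (by omega)
  rw [h3] at h1
  rw [mul_comm, h1]

lemma binom_toReal (m : ℕ) (k : Fin (m+1)) :
    (PMF.binomial (1/2) (by norm_num) m k).toReal = (m.choose k : ℝ) * (1/2)^m := by
  rw [PMF.binomial_apply]
  have hsub : ((Fin.last m : ℕ) : ℕ) - (k : ℕ) = m - (k : ℕ) := by simp
  rw [hsub]
  have h2 : (1:ENNReal) - 1/2 = 1/2 := by
    rw [one_div, ENNReal.one_sub_inv_two]
  have h0 : (((1/2 : NNReal)) : ENNReal) = 1/2 := by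
    rw [ENNReal.coe_div (by norm_num)]; simp
  rw [h0, h2]
  rw [ENNReal.toReal_mul, ENNReal.toReal_mul, ENNReal.toReal_pow, ENNReal.toReal_pow]
  have h3 : ((1:ENNReal)/2).toReal = (1:ℝ)/2 := by simp
  rw [h3, ENNReal.toReal_natCast, ← pow_add]
  have : (k:ℕ) + (m - (k:ℕ)) = m := by omega
  rw [this]; ring

lemma real_sum (m : ℕ) :
    ∑ k ∈ Finset.range (m+1),
      ((m.choose k : ℝ) * (1/2)^m * k / (1 + ((m - k : ℕ):ℝ))) ≤ 1 := by
  have hterm : ∀ k ∈ Finset.range (m+1),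
      (m.choose k : ℝ) * (1/2)^m * k / (1 + ((m - k : ℕ):ℝ))
        = ((1:ℝ)/2)^m / ((m:ℝ)+1) * ((k * (m+1).choose k : ℕ) : ℝ) := by
    intro k hk
    rw [Finset.mem_range] at hk
    have hk' : k ≤ m := by omega
    have h1 : (1 + ((m - k : ℕ):ℝ)) = ((m + 1 - k : ℕ):ℝ) := by
      have : m + 1 - k = (m - k) + 1 := by omega
      rw [this]; push_cast; ring
    have h2 : ((m+1-k : ℕ):ℝ) * ((m+1).choose k : ℝ) = ((m+1):ℝ) * (m.choose k : ℝ) := by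
      exact_mod_cast congrArg (Nat.cast : ℕ → ℝ) (key_id m k hk')
    have hne : ((m+1-k : ℕ):ℝ) ≠ 0 := by
      have : 0 < m + 1 - k := by omega
      positivity
    have hne2 : ((m:ℝ)+1) ≠ 0 := by positivity
    rw [h1]
    push_cast
    field_simp
    linear_combination (-(k:ℝ)) * h2
  rw [Finset.sum_congr rfl hterm, ← Finset.mul_sum]
  have hb : ∑ k ∈ Finset.range (m+1), ((k * (m+1).choose k : ℕ) : ℝ)
      ≤ ((m+1) * 2^m : ℕ) := by
    rw [← sum_k_choose m, ← Nat.cast_sum]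
    have : (∑ k ∈ Finset.range (m+1), k * (m+1).choose k)
        ≤ ∑ k ∈ Finset.range (m+2), k * (m+1).choose k :=
      Finset.sum_le_sum_of_subset (Finset.range_subset_range.2 (by omega))
    exact_mod_cast this
  calc ((1:ℝ)/2)^m / ((m:ℝ)+1) * ∑ k ∈ Finset.range (m+1), ((k * (m+1).choose k : ℕ) : ℝ)
      ≤ ((1:ℝ)/2)^m / ((m:ℝ)+1) * ((m+1) * 2^m : ℕ) := by
        apply mul_le_mul_of_nonneg_left hb; positivity
    _ = 1 := by
        push_cast
        have hne2 : ((m:ℝ)+1) ≠ 0 := by positivity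
        field_simp
        rw [← mul_pow]; norm_num

/-- Binomial lemma underlying knockoff FDR control: for `V ~ Binomial(m, 1/2)` and
`R = m − V`, we have `E[V/(1+R)] ≤ 1`. -/
theorem binomial_knockoff_lemma (m : ℕ) :
    (∑ k : Fin (m + 1),
        ((PMF.binomial (1/2) (by norm_num) m k).toReal
          * ((k : ℕ) : ℝ) / (1 + ((m - (k : ℕ) : ℕ) : ℝ)))) ≤ 1 := by
  have h : ∀ k : Fin (m+1),
      (PMF.binomial (1/2) (by norm_num) m k).toReal * ((k : ℕ) : ℝ)
          / (1 + ((m - (k : ℕ) : ℕ) : ℝ))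
        = (m.choose (k:ℕ) : ℝ) * (1/2)^m * ((k:ℕ):ℝ) / (1 + ((m - (k : ℕ) : ℕ) : ℝ)) := by
    intro k; rw [binom_toReal]
  rw [Finset.sum_congr rfl (fun k _ => h k),
    Fin.sum_univ_eq_sum_range (fun k => (m.choose k : ℝ) * (1/2)^m * (k:ℝ) / (1 + ((m - k : ℕ):ℝ)))]
  exact real_sum m
end

section
/- For the lasso with fixed design X (columns in general position), fixed λ > 0, selected active set M with signs s: the KKT conditions imply that on the event that the lasso active set is M with signs s, the inactive-coordinate subgradient condition ‖X_{−M}ᵀ(y − X_M β̂_M)‖_∞ ≤ λ can be written as a finite set of affine inequalities in y: (1/λ)X_{−M}ᵀ(I − Q_M)y ≤ 1 − X_{−M}ᵀ(X_Mᵀ)⁺s and −(1/λ)X_{−M}ᵀ(I − Q_M)y ≤ 1 + X_{−M}ᵀ(X_Mᵀ)⁺s, where Q_M = X_M(X_MᵀX_M)⁻¹X_Mᵀ. -/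
lemma lasso_aux (lam A c : ℝ) (h : 0 < lam) :
    |A + lam * c| ≤ lam ↔ (1/lam) * A ≤ 1 - c ∧ -((1/lam) * A) ≤ 1 + c := by
  rw [abs_le]
  constructor
  · rintro ⟨h1, h2⟩
    constructor
    · rw [one_div, ← div_eq_inv_mul, div_le_iff₀ h]; nlinarith
    · rw [one_div, ← div_eq_inv_mul, neg_le, le_div_iff₀ h]; nlinarith
  · rintro ⟨h1, h2⟩
    rw [one_div, ← div_eq_inv_mul, div_le_iff₀ h] at h1
    rw [one_div, ← div_eq_inv_mul, neg_le, le_div_iff₀ h] at h2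
    constructor <;> nlinarith

/-- The lasso inactive-coordinate KKT subgradient condition
`‖X₋ᴹᵀ(y − X_M β̂_M)‖_∞ ≤ λ` is equivalent to a finite set of affine inequalities
in `y`. -/
theorem lasso_inactive_kkt_affine
    {n p : ℕ} (X : Matrix (Fin n) (Fin p) ℝ) (M : Finset (Fin p))
    (lam : ℝ) (hlam : 0 < lam)
    (s : {j // j ∈ M} → ℝ) (hs : ∀ j, s j = 1 ∨ s j = -1)
    (y : Fin n → ℝ)
    (XM : Matrix (Fin n) {j // j ∈ M} ℝ) (hXM : XM = X.submatrix id Subtype.val)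
    (XmM : Matrix (Fin n) {j // j ∉ M} ℝ) (hXmM : XmM = X.submatrix id Subtype.val)
    (G : Matrix {j // j ∈ M} {j // j ∈ M} ℝ) (hG : G = XM.transpose * XM)
    (hGinv : IsUnit G.det)
    (QM : Matrix (Fin n) (Fin n) ℝ) (hQM : QM = XM * G⁻¹ * XM.transpose)
    (βhat : {j // j ∈ M} → ℝ)
    (hβhat : βhat = G⁻¹.mulVec (XM.transpose.mulVec y - lam • s)) :
    (∀ j, |XmM.transpose.mulVec (y - XM.mulVec βhat) j| ≤ lam)
      ↔ (∀ j,
          (1 / lam) * (XmM.transpose * ((1 : Matrix (Fin n) (Fin n) ℝ) - QM)).mulVec y j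
            ≤ 1 - (XmM.transpose * (XM * G⁻¹)).mulVec s j
          ∧ -((1 / lam) * (XmM.transpose * ((1 : Matrix (Fin n) (Fin n) ℝ) - QM)).mulVec y j)
            ≤ 1 + (XmM.transpose * (XM * G⁻¹)).mulVec s j) := by
  have key : ∀ j, XmM.transpose.mulVec (y - XM.mulVec βhat) j
      = (XmM.transpose * ((1 : Matrix (Fin n) (Fin n) ℝ) - QM)).mulVec y j
        + lam * (XmM.transpose * (XM * G⁻¹)).mulVec s j := by
    intro j
    subst hβhat hQM
    simp only [Matrix.mulVec_sub, Matrix.sub_mulVec, Matrix.mul_sub, Matrix.mul_one,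
      Matrix.mulVec_smul, ← Matrix.mulVec_mulVec, Pi.sub_apply, Pi.smul_apply,
      smul_eq_mul, Matrix.mul_assoc]
    ring
  constructor
  · intro h j
    have := h j
    rw [key j, lasso_aux _ _ _ hlam] at this
    exact this
  · intro h j
    rw [key j, lasso_aux _ _ _ hlam]
    exact h j
end
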